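/- arXiv:2601.22736 — 3 statements merged into one kernel-verified Lean document; each statement's English description precedes it below -/
import Mathlib

section
/- Let C be a nonempty index set and L, U : C → ℝ with L c ≤ U c for all c ∈ C. Suppose all four extrema are attained: there exist indices realizing L̲ = sInf (range L), L̄ = sSup (range L), U̲ = sInf (range U), Ū = sSup (range U), and suppose L̄ ≤ U̲. Then the set difference (⋃_{c ∈ C} [L c, U c]) \ (⋂_{c ∈ C} [L c, U c]) equals [L̲, L̄) ∪ (U̲, Ū] (the half-open lower band Ico L̲ L̄ together with the half-open upper band Ioc U̲ Ū). -/
/-! The union of the intervals is the single interval `[L̲, Ū]`: a point below `L̄ ≤ U̲` lies in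
the interval whose left end is `L̲`, a point above it in the interval whose right end is `Ū`.
The intersection is `[L̄, U̲]`. Removing the middle interval `[L̄, U̲]` from `[L̲, Ū]` leaves the
two bands. -/

open Set

theorem isLeast_csInf_of_mem {α : Type*} [ConditionallyCompleteLattice α] {s : Set α}
    (hs : BddBelow s) (h : sInf s ∈ s) : IsLeast s (sInf s) :=
  ⟨h, fun _ => csInf_le hs⟩

theorem isGreatest_csSup_of_mem {α : Type*} [ConditionallyCompleteLattice α] {s : Set α}
    (hs : BddAbove s) (h : sSup s ∈ s) : IsGreatest s (sSup s) :=
  ⟨h, fun _ => le_csSup hs⟩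

section IntervalFamily

variable {α ι : Type*} {L U : ι → α} {a b c d : α}

theorem iInter_Icc_eq_Icc_of_isLUB_of_isGLB [Preorder α] (hb : IsLUB (range L) b)
    (hc : IsGLB (range U) c) : ⋂ i, Icc (L i) (U i) = Icc b c := by
  ext x
  simp only [mem_iInter, mem_Icc, forall_and, isLUB_le_iff hb, le_isGLB_iff hc,
    mem_upperBounds, mem_lowerBounds, forall_mem_range]

theorem iUnion_Icc_eq_Icc_of_isLeast_of_isGreatest [LinearOrder α] (ha : IsLeast (range L) a)
    (hd : IsGreatest (range U) d) (hLU : ∀ i j, L i ≤ U j) :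
    ⋃ i, Icc (L i) (U i) = Icc a d := by
  obtain ⟨⟨i, rfl⟩, hi⟩ := ha
  obtain ⟨⟨j, rfl⟩, hj⟩ := hd
  refine Subset.antisymm (iUnion_subset fun k => Icc_subset_Icc (hi ⟨k, rfl⟩) (hj ⟨k, rfl⟩)) ?_
  rintro x ⟨hix, hxj⟩
  rcases le_or_gt x (U i) with hxi | hix'
  · exact mem_iUnion_of_mem i ⟨hix, hxi⟩
  · exact mem_iUnion_of_mem j ⟨(hLU j i).trans hix'.le, hxj⟩

theorem Icc_sdiff_Icc_of_le [LinearOrder α] (hab : a ≤ b) (hbc : b ≤ c) (hcd : c ≤ d) :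
    Icc a d \ Icc b c = Ico a b ∪ Ioc c d := by
  ext x
  simp only [mem_sdiff, mem_Icc, mem_union, mem_Ico, mem_Ioc, not_and_or, not_le]
  grind

end IntervalFamily

theorem union_diff_inter_Icc_eq_bands_general
    {C : Type*} (L U : C → ℝ)
    (hLbb : BddBelow (Set.range L)) (hLba : BddAbove (Set.range L))
    (hUbb : BddBelow (Set.range U)) (hUba : BddAbove (Set.range U))
    (hLinf : ∃ c : C, L c = sInf (Set.range L))
    (hLsup : ∃ c : C, L c = sSup (Set.range L))
    (hUinf : ∃ c : C, U c = sInf (Set.range U))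
    (hUsup : ∃ c : C, U c = sSup (Set.range U))
    (hmid : sSup (Set.range L) ≤ sInf (Set.range U)) :
    (⋃ c : C, Set.Icc (L c) (U c)) \ (⋂ c : C, Set.Icc (L c) (U c)) =
      Set.Ico (sInf (Set.range L)) (sSup (Set.range L)) ∪
      Set.Ioc (sInf (Set.range U)) (sSup (Set.range U)) := by
  have hLmin := isLeast_csInf_of_mem hLbb hLinf
  have hLmax := isGreatest_csSup_of_mem hLba hLsup
  have hUmin := isLeast_csInf_of_mem hUbb hUinf
  have hUmax := isGreatest_csSup_of_mem hUba hUsup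
  have hLU : ∀ i j, L i ≤ U j := fun i j =>
    (hLmax.2 ⟨i, rfl⟩).trans (hmid.trans (hUmin.2 ⟨j, rfl⟩))
  rw [iUnion_Icc_eq_Icc_of_isLeast_of_isGreatest hLmin hUmax hLU,
    iInter_Icc_eq_Icc_of_isLUB_of_isGLB hLmax.isLUB hUmin.isGLB,
    Icc_sdiff_Icc_of_le (hLmin.2 hLmax.1) hmid (hUmin.2 hUmax.1)]

/-- The outer band (union minus intersection) of the intervals `[L c, U c]` is the half-open
lower band `[L̲, L̄)` together with the half-open upper band `(U̲, Ū]`. -/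
theorem union_diff_inter_Icc_eq_bands
    {C : Type*} [Nonempty C] (L U : C → ℝ)
    (hLU : ∀ c : C, L c ≤ U c)
    (hLbb : BddBelow (Set.range L)) (hLba : BddAbove (Set.range L))
    (hUbb : BddBelow (Set.range U)) (hUba : BddAbove (Set.range U))
    (hLinf : ∃ c : C, L c = sInf (Set.range L))
    (hLsup : ∃ c : C, L c = sSup (Set.range L))
    (hUinf : ∃ c : C, U c = sInf (Set.range U))
    (hUsup : ∃ c : C, U c = sSup (Set.range U))
    (hmid : sSup (Set.range L) ≤ sInf (Set.range U)) :
    (⋃ c : C, Set.Icc (L c) (U c)) \ (⋂ c : C, Set.Icc (L c) (U c)) =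
      Set.Ico (sInf (Set.range L)) (sSup (Set.range L)) ∪
      Set.Ioc (sInf (Set.range U)) (sSup (Set.range U)) :=
  union_diff_inter_Icc_eq_bands_general L U hLbb hLba hUbb hUba hLinf hLsup hUinf hUsup hmid
end

section
/- Let C be a nonempty index set and L, U : C → ℝ with L c ≤ U c for all c ∈ C. Suppose all four extrema are attained: there exist indices realizing L̲ = sInf (range L), L̄ = sSup (range L), U̲ = sInf (range U), Ū = sSup (range U), and suppose L̄ ≤ U̲. Then the set difference (⋃_{c ∈ C} [L c, U c]) \ (⋂_{c ∈ C} [L c, U c]) equals [L̲, L̄) ∪ (U̲, Ū]. -/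
/-! The intersection of the intervals is always `[⨆ L, ⨅ U]`. The union is `[⨅ L, ⨆ U]`: the
interval of an index minimising `L` reaches up to `⨅ U`, that of an index maximising `U` starts
below `⨆ L`, and the gap condition `⨆ L ≤ ⨅ U` lets the two overlap. The band region is then the
difference of two nested intervals. -/

namespace Set

variable {α ι : Type*} {L U : ι → α}

theorem Icc_diff_Icc_eq_Ico_union_Ioc [LinearOrder α] {a b c d : α} (hac : a ≤ c) (hbd : b ≤ d) :
    Icc a d \ Icc b c = Ico a b ∪ Ioc c d := by
  ext x
  simp only [mem_sdiff, mem_Icc, mem_union, mem_Ico, mem_Ioc, not_and_or, not_le]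
  constructor
  · rintro ⟨⟨hax, hxd⟩, hxb | hcx⟩
    exacts [Or.inl ⟨hax, hxb⟩, Or.inr ⟨hcx, hxd⟩]
  · rintro (⟨hax, hxb⟩ | ⟨hcx, hxd⟩)
    exacts [⟨⟨hax, hxb.le.trans hbd⟩, Or.inl hxb⟩, ⟨⟨hac.trans hcx.le, hxd⟩, Or.inr hcx⟩]

theorem iInter_Icc_eq_Icc_ciSup_ciInf [ConditionallyCompleteLattice α] [Nonempty ι]
    (hLba : BddAbove (range L)) (hUbb : BddBelow (range U)) :
    ⋂ i, Icc (L i) (U i) = Icc (⨆ i, L i) (⨅ i, U i) := by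
  ext x
  simp only [mem_iInter, mem_Icc, forall_and, ciSup_le_iff hLba, le_ciInf_iff hUbb]

theorem iUnion_Icc_eq_Icc_ciInf_ciSup [ConditionallyCompleteLinearOrder α]
    (hLbb : BddBelow (range L)) (hLba : BddAbove (range L))
    (hUbb : BddBelow (range U)) (hUba : BddAbove (range U))
    (hLinf : ∃ i, L i = ⨅ i, L i) (hUsup : ∃ i, U i = ⨆ i, U i)
    (hmid : ⨆ i, L i ≤ ⨅ i, U i) :
    ⋃ i, Icc (L i) (U i) = Icc (⨅ i, L i) (⨆ i, U i) := by
  refine Subset.antisymm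
    (iUnion_subset fun i => Icc_subset_Icc (ciInf_le hLbb i) (le_ciSup hUba i)) ?_
  rintro x ⟨hax, hxd⟩
  obtain ⟨i₀, hi₀⟩ := hLinf
  obtain ⟨i₁, hi₁⟩ := hUsup
  rcases le_total x (⨅ i, U i) with hx | hx
  · exact mem_iUnion.2 ⟨i₀, hi₀.trans_le hax, hx.trans (ciInf_le hUbb i₀)⟩
  · exact mem_iUnion.2 ⟨i₁, (le_ciSup hLba i₁).trans (hmid.trans hx), hxd.trans_eq hi₁.symm⟩

end Set

theorem ate_union_diff_inter_Icc_eq_bands_general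
    {C : Type*} [Nonempty C] (L U : C → ℝ)
    (hLbb : BddBelow (Set.range L)) (hLba : BddAbove (Set.range L))
    (hUbb : BddBelow (Set.range U)) (hUba : BddAbove (Set.range U))
    (hLinf : ∃ c : C, L c = sInf (Set.range L))
    (hUsup : ∃ c : C, U c = sSup (Set.range U))
    (hmid : sSup (Set.range L) ≤ sInf (Set.range U)) :
    (⋃ c : C, Set.Icc (L c) (U c)) \ (⋂ c : C, Set.Icc (L c) (U c)) =
      Set.Ico (sInf (Set.range L)) (sSup (Set.range L)) ∪
      Set.Ioc (sInf (Set.range U)) (sSup (Set.range U)) := by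
  obtain ⟨c⟩ := ‹Nonempty C›
  rw [Set.iUnion_Icc_eq_Icc_ciInf_ciSup hLbb hLba hUbb hUba hLinf hUsup hmid,
    Set.iInter_Icc_eq_Icc_ciSup_ciInf hLba hUbb]
  exact Set.Icc_diff_Icc_eq_Ico_union_Ioc ((ciInf_le hLbb c).trans ((le_ciSup hLba c).trans hmid))
    (hmid.trans ((ciInf_le hUbb c).trans (le_ciSup hUba c)))

/-- The sample-uncertainty (outer band) region for the ATE: the union of the intervals
`[L c, U c]` minus their intersection equals `[L̲, L̄) ∪ (U̲, Ū]`. -/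
theorem ate_union_diff_inter_Icc_eq_bands
    {C : Type*} [Nonempty C] (L U : C → ℝ)
    (hLU : ∀ c : C, L c ≤ U c)
    (hLbb : BddBelow (Set.range L)) (hLba : BddAbove (Set.range L))
    (hUbb : BddBelow (Set.range U)) (hUba : BddAbove (Set.range U))
    (hLinf : ∃ c : C, L c = sInf (Set.range L))
    (hLsup : ∃ c : C, L c = sSup (Set.range L))
    (hUinf : ∃ c : C, U c = sInf (Set.range U))
    (hUsup : ∃ c : C, U c = sSup (Set.range U))
    (hmid : sSup (Set.range L) ≤ sInf (Set.range U)) :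
    (⋃ c : C, Set.Icc (L c) (U c)) \ (⋂ c : C, Set.Icc (L c) (U c)) =
      Set.Ico (sInf (Set.range L)) (sSup (Set.range L)) ∪
      Set.Ioc (sInf (Set.range U)) (sSup (Set.range U)) :=
  ate_union_diff_inter_Icc_eq_bands_general L U hLbb hLba hUbb hUba hLinf hUsup hmid
end

section
/- Let a : Fin 2 → Fin 2 → Fin 2 → ℝ be given nonnegative reals (where a y x z represents P(Y=y, X=x | Z=z)) with ∑_{y,x} a y x z = 1 for each z. Define the polytope Q of response-variable distributions as the set of q : Fin 4 → Fin 4 → ℝ with all q i j ≥ 0 satisfying the eight linear constraints: a 0 0 0 = q 0 0 + q 1 0 + q 0 1 + q 1 1; a 0 1 0 = q 2 0 + q 2 2 + q 3 0 + q 3 2; a 1 0 0 = q 0 2 + q 0 3 + q 1 2 + q 1 3; a 1 1 0 = q 2 1 + q 2 3 + q 3 1 + q 3 3; a 0 0 1 = q 0 0 + q 2 0 + q 0 1 + q 2 1; a 0 1 1 = q 1 0 + q 1 2 + q 3 0 + q 3 2; a 1 0 1 = q 0 2 + q 0 3 + q 2 2 + q 2 3; a 1 1 1 = q 1 1 + q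 1 3 + q 3 1 + q 3 3. Define F(q) = ∑_{i=0}^{3} (q i 1 + q i 3) and G(q) = ∑_{i=0}^{3} (q i 2 + q i 3). If Q is nonempty, then there exists q* ∈ Q that simultaneously attains the maximum of F over Q and the minimum of G over Q. -/
/-!
The observational distribution constrains `q` only through, for each compliance type `i`, its
mass `m i` and the masses `u i`, `v i` of `Y(x₀) = 1` and of `Y(x₁) = 1` inside it; conversely,
any such marginals with `u i, v i ∈ [0, m i]` are realised by a coupling. For fixed type masses,
`P(y₁|do(x₁)) = ∑ v` and `P(y₁|do(x₀)) = ∑ u` are optimised by independent choices of `v` and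
`u`, so their extremes are attained simultaneously. The type masses form a one-parameter family
indexed by the never-taker mass `m 0`, along which the sharp upper bound on `∑ v` increases and
the sharp lower bound on `∑ u` decreases; so both extremes over `Q` are attained at a point of
maximal never-taker mass, which exists by compactness.
-/

open Finset Set

/-- `q i j = P(R_x = i, R_y = j)`, where `i` = never-taker, complier, defier, always-taker and
`j` encodes `(Y(x₀), Y(x₁))` = `(0,0), (0,1), (1,0), (1,1)`. -/
def ivPolytope (a : Fin 2 → Fin 2 → Fin 2 → ℝ) : Set (Fin 4 → Fin 4 → ℝ) :=
  {q | (∀ i j : Fin 4, 0 ≤ q i j) ∧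
    a 0 0 0 = q 0 0 + q 1 0 + q 0 1 + q 1 1 ∧
    a 0 1 0 = q 2 0 + q 2 2 + q 3 0 + q 3 2 ∧
    a 1 0 0 = q 0 2 + q 0 3 + q 1 2 + q 1 3 ∧
    a 1 1 0 = q 2 1 + q 2 3 + q 3 1 + q 3 3 ∧
    a 0 0 1 = q 0 0 + q 2 0 + q 0 1 + q 2 1 ∧
    a 0 1 1 = q 1 0 + q 1 2 + q 3 0 + q 3 2 ∧
    a 1 0 1 = q 0 2 + q 0 3 + q 2 2 + q 2 3 ∧
    a 1 1 1 = q 1 1 + q 1 3 + q 3 1 + q 3 3}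

def typeMass (q : Fin 4 → Fin 4 → ℝ) (i : Fin 4) : ℝ := ∑ j, q i j

def y0Mass (q : Fin 4 → Fin 4 → ℝ) (i : Fin 4) : ℝ := q i 2 + q i 3

def y1Mass (q : Fin 4 → Fin 4 → ℝ) (i : Fin 4) : ℝ := q i 1 + q i 3

lemma y0Mass_mem_Icc {q : Fin 4 → Fin 4 → ℝ} {i : Fin 4} (hq : ∀ j, 0 ≤ q i j) :
    y0Mass q i ∈ Icc 0 (typeMass q i) := by
  simp only [y0Mass, typeMass, Fin.sum_univ_four, Set.mem_Icc]
  constructor <;> linarith [hq 0, hq 1, hq 2, hq 3]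

lemma y1Mass_mem_Icc {q : Fin 4 → Fin 4 → ℝ} {i : Fin 4} (hq : ∀ j, 0 ≤ q i j) :
    y1Mass q i ∈ Icc 0 (typeMass q i) := by
  simp only [y1Mass, typeMass, Fin.sum_univ_four, Set.mem_Icc]
  constructor <;> linarith [hq 0, hq 1, hq 2, hq 3]

/-- The constraints of `ivPolytope a` in terms of the type masses `m` and the masses `u`, `v` of
`Y(x₀) = 1` and `Y(x₁) = 1` within each type. -/
structure ObsCompatible (a : Fin 2 → Fin 2 → Fin 2 → ℝ) (m u v : Fin 4 → ℝ) : Prop where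
  x0_z0 : m 0 + m 1 = a 0 0 0 + a 1 0 0
  x1_z0 : m 2 + m 3 = a 0 1 0 + a 1 1 0
  x0_z1 : m 0 + m 2 = a 0 0 1 + a 1 0 1
  x1_z1 : m 1 + m 3 = a 0 1 1 + a 1 1 1
  y1_x0_z0 : u 0 + u 1 = a 1 0 0
  y1_x1_z0 : v 2 + v 3 = a 1 1 0
  y1_x0_z1 : u 0 + u 2 = a 1 0 1
  y1_x1_z1 : v 1 + v 3 = a 1 1 1

lemma mem_ivPolytope_iff {a : Fin 2 → Fin 2 → Fin 2 → ℝ} {q : Fin 4 → Fin 4 → ℝ} :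
    q ∈ ivPolytope a ↔
      (∀ i j, 0 ≤ q i j) ∧ ObsCompatible a (typeMass q) (y0Mass q) (y1Mass q) := by
  refine and_congr_right fun _ => ⟨fun ⟨h₁, h₂, h₃, h₄, h₅, h₆, h₇, h₈⟩ => ?_, fun h => ?_⟩
  · constructor <;> simp only [typeMass, y0Mass, y1Mass, Fin.sum_univ_four] <;> linarith
  · obtain ⟨h₁, h₂, h₃, h₄, h₅, h₆, h₇, h₈⟩ := h
    simp only [typeMass, y0Mass, y1Mass, Fin.sum_univ_four] at *
    refine ⟨?_, ?_, ?_, ?_, ?_, ?_, ?_, ?_⟩ <;> linarith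

lemma isClosed_ivPolytope (a : Fin 2 → Fin 2 → Fin 2 → ℝ) : IsClosed (ivPolytope a) := by
  simp only [ivPolytope, Set.ofPred_and, Set.ofPred_forall]
  refine .inter (isClosed_iInter fun i => isClosed_iInter fun j =>
    isClosed_le continuous_const (by fun_prop)) ?_
  repeat' apply IsClosed.inter
  all_goals exact isClosed_eq continuous_const (by fun_prop)

lemma ivPolytope_subset_Icc (a : Fin 2 → Fin 2 → Fin 2 → ℝ) :
    ivPolytope a ⊆ Icc 0 fun _ _ => a 0 0 0 + a 1 0 0 + (a 0 1 0 + a 1 1 0) := by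
  intro q hq
  obtain ⟨hnn, h⟩ := mem_ivPolytope_iff.1 hq
  have htotal : ∑ i, typeMass q i = a 0 0 0 + a 1 0 0 + (a 0 1 0 + a 1 1 0) := by
    rw [Fin.sum_univ_four, ← h.x0_z0, ← h.x1_z0]
    ring
  refine ⟨fun i j => hnn i j, fun i j => ?_⟩
  calc q i j ≤ typeMass q i := single_le_sum (fun k _ => hnn i k) (mem_univ j)
    _ ≤ ∑ i, typeMass q i :=
      single_le_sum (fun k _ => sum_nonneg fun l _ => hnn k l) (mem_univ i)
    _ = _ := htotal

lemma isCompact_ivPolytope (a : Fin 2 → Fin 2 → Fin 2 → ℝ) : IsCompact (ivPolytope a) :=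
  isCompact_Icc.of_isClosed_subset (isClosed_ivPolytope a) (ivPolytope_subset_Icc a)

/-- The Fréchet coupling of two events of masses `u` and `v` in a population of mass `m`,
laid out as `(¬A ∧ ¬B, ¬A ∧ B, A ∧ ¬B, A ∧ B)`. -/
def coupling (m u v : ℝ) : Fin 4 → ℝ := ![m - max u v, v - min u v, u - min u v, min u v]

lemma coupling_nonneg {m u v : ℝ} (hu : u ∈ Icc 0 m) (hv : v ∈ Icc 0 m) (j : Fin 4) :
    0 ≤ coupling m u v j := by
  fin_cases j <;> simp [coupling, hu.1, hv.1, hu.2, hv.2]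

section Coupling

variable {m u v : Fin 4 → ℝ}

lemma typeMass_coupling : typeMass (fun i => coupling (m i) (u i) (v i)) = m := by
  ext i
  simp only [typeMass, coupling, Fin.sum_univ_four, Matrix.cons_val]
  linarith [min_add_max (u i) (v i)]

lemma y0Mass_coupling : y0Mass (fun i => coupling (m i) (u i) (v i)) = u := by
  ext i
  simp [y0Mass, coupling]

lemma y1Mass_coupling : y1Mass (fun i => coupling (m i) (u i) (v i)) = v := by
  ext i
  simp [y1Mass, coupling]

lemma coupling_mem_ivPolytope {a : Fin 2 → Fin 2 → Fin 2 → ℝ}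
    (hu : ∀ i, u i ∈ Icc 0 (m i)) (hv : ∀ i, v i ∈ Icc 0 (m i)) (h : ObsCompatible a m u v) :
    (fun i => coupling (m i) (u i) (v i)) ∈ ivPolytope a := by
  rw [mem_ivPolytope_iff, typeMass_coupling, y0Mass_coupling, y1Mass_coupling]
  exact ⟨fun i => coupling_nonneg (hu i) (hv i), h⟩

end Coupling

lemma exists_y0Profile_min {m u : Fin 4 → ℝ} {b₀ b₁ : ℝ} (hu : ∀ i, u i ∈ Icc 0 (m i))
    (h₀ : u 0 + u 1 = b₀) (h₁ : u 0 + u 2 = b₁) :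
    ∃ u' : Fin 4 → ℝ, (∀ i, u' i ∈ Icc 0 (m i)) ∧ u' 0 + u' 1 = b₀ ∧ u' 0 + u' 2 = b₁ ∧
      ∑ i, u' i = max (b₀ + b₁ - m 0) (max b₁ b₀) := by
  -- Type 0 carries as much of `b₀` and `b₁` as it can, type 3 nothing.
  set g := min (m 0) (min b₀ b₁)
  have hug : u 0 ≤ g := le_min (hu 0).2 (le_min (by linarith [(hu 1).1]) (by linarith [(hu 2).1]))
  have hgm : g ≤ m 0 := min_le_left _ _
  have hgb₀ : g ≤ b₀ := (min_le_right _ _).trans (min_le_left _ _)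
  have hgb₁ : g ≤ b₁ := (min_le_right _ _).trans (min_le_right _ _)
  refine ⟨![g, b₀ - g, b₁ - g, 0], fun i => ?_, by simp, by simp, ?_⟩
  · fin_cases i <;> refine ⟨?_, ?_⟩ <;>
      simp only [Fin.zero_eta, Fin.mk_one, Fin.reduceFinMk, Matrix.cons_val] <;>
      linarith [(hu 0).1, (hu 1).2, (hu 2).2, (hu 3).1, (hu 3).2]
  · calc ∑ i, ![g, b₀ - g, b₁ - g, 0] i = b₀ + b₁ - g := by simp only [Fin.sum_univ_four, Matrix.cons_val]; ring
      _ = max (b₀ + b₁ - m 0) (max (b₀ + b₁ - b₀) (b₀ + b₁ - b₁)) := by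
        rw [max_sub_sub_left, max_sub_sub_left]
      _ = _ := by rw [add_sub_cancel_left, add_sub_cancel_right]

lemma exists_y1Profile_max {m v : Fin 4 → ℝ} {c₀ c₁ : ℝ} (hv : ∀ i, v i ∈ Icc 0 (m i))
    (h₀ : v 2 + v 3 = c₀) (h₁ : v 1 + v 3 = c₁) :
    ∃ v' : Fin 4 → ℝ, (∀ i, v' i ∈ Icc 0 (m i)) ∧ v' 2 + v' 3 = c₀ ∧ v' 1 + v' 3 = c₁ ∧
      ∑ i, v' i = min (m 0 + c₀ + c₁) (min (m 0 + m 1 + c₀) (m 0 + m 2 + c₁)) := by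
  -- Type 0 is filled completely, type 3 carries as little of `c₀` and `c₁` as it can.
  set f := max 0 (max (c₁ - m 1) (c₀ - m 2))
  have hfv : f ≤ v 3 :=
    max_le (hv 3).1 (max_le (by linarith [(hv 1).2]) (by linarith [(hv 2).2]))
  have hf : 0 ≤ f := le_max_left _ _
  have hfc₁ : c₁ - m 1 ≤ f := (le_max_left _ _).trans (le_max_right _ _)
  have hfc₀ : c₀ - m 2 ≤ f := (le_max_right _ _).trans (le_max_right _ _)
  refine ⟨![m 0, c₁ - f, c₀ - f, f], fun i => ?_, by simp, by simp, ?_⟩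
  · fin_cases i <;> refine ⟨?_, ?_⟩ <;>
      simp only [Fin.zero_eta, Fin.mk_one, Fin.reduceFinMk, Matrix.cons_val] <;>
      linarith [(hv 0).1, (hv 0).2, (hv 1).1, (hv 2).1, (hv 3).2]
  · calc ∑ i, ![m 0, c₁ - f, c₀ - f, f] i = m 0 + c₀ + c₁ - f := by
          simp only [Fin.sum_univ_four, Matrix.cons_val]; ring
      _ = min (m 0 + c₀ + c₁ - 0)
            (min (m 0 + c₀ + c₁ - (c₁ - m 1)) (m 0 + c₀ + c₁ - (c₀ - m 2))) := by
        rw [min_sub_sub_left, min_sub_sub_left]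
      _ = _ := by congr 2 <;> ring

section Bounds

variable (a : Fin 2 → Fin 2 → Fin 2 → ℝ)

/-- Sharp upper bound on `P(y₁|do(x₁))` among the points of `ivPolytope a` with never-taker
mass `t`. -/
def upperDoX1 (t : ℝ) : ℝ :=
  min (t + a 1 1 0 + a 1 1 1) (min (a 0 0 0 + a 1 0 0 + a 1 1 0) (a 0 0 1 + a 1 0 1 + a 1 1 1))

/-- Sharp lower bound on `P(y₁|do(x₀))` among the points of `ivPolytope a` with never-taker
mass `t`. -/
def lowerDoX0 (t : ℝ) : ℝ := max (a 1 0 0 + a 1 0 1 - t) (max (a 1 0 1) (a 1 0 0))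

lemma upperDoX1_mono : Monotone (upperDoX1 a) := fun _ _ hst =>
  min_le_min_right _ (by linarith)

lemma lowerDoX0_anti : Antitone (lowerDoX0 a) := fun _ _ hst =>
  max_le_max_right _ (by linarith)

variable {a} {q : Fin 4 → Fin 4 → ℝ}

lemma sum_y1Mass_le_upperDoX1 (hq : q ∈ ivPolytope a) :
    ∑ i, y1Mass q i ≤ upperDoX1 a (typeMass q 0) := by
  obtain ⟨hnn, h⟩ := mem_ivPolytope_iff.1 hq
  have hv := fun i => y1Mass_mem_Icc (hnn i)
  rw [Fin.sum_univ_four, upperDoX1]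
  refine le_min ?_ (le_min ?_ ?_) <;>
    linarith [h.x0_z0, h.x0_z1, h.y1_x1_z0, h.y1_x1_z1, (hv 0).2, (hv 1).2, (hv 2).2, (hv 3).1]

lemma lowerDoX0_le_sum_y0Mass (hq : q ∈ ivPolytope a) :
    lowerDoX0 a (typeMass q 0) ≤ ∑ i, y0Mass q i := by
  obtain ⟨hnn, h⟩ := mem_ivPolytope_iff.1 hq
  have hu := fun i => y0Mass_mem_Icc (hnn i)
  rw [Fin.sum_univ_four, lowerDoX0]
  refine max_le ?_ (max_le ?_ ?_) <;>
    linarith [h.y1_x0_z0, h.y1_x0_z1, (hu 0).2, (hu 1).1, (hu 2).1, (hu 3).1]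

lemma exists_mem_ivPolytope_attaining_bounds (hq : q ∈ ivPolytope a) :
    ∃ q' ∈ ivPolytope a, ∑ i, y1Mass q' i = upperDoX1 a (typeMass q 0) ∧
      ∑ i, y0Mass q' i = lowerDoX0 a (typeMass q 0) := by
  obtain ⟨hnn, h⟩ := mem_ivPolytope_iff.1 hq
  obtain ⟨u, hu, hu₀, hu₁, hu_sum⟩ :=
    exists_y0Profile_min (fun i => y0Mass_mem_Icc (hnn i)) h.y1_x0_z0 h.y1_x0_z1
  obtain ⟨v, hv, hv₀, hv₁, hv_sum⟩ :=
    exists_y1Profile_max (fun i => y1Mass_mem_Icc (hnn i)) h.y1_x1_z0 h.y1_x1_z1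
  refine ⟨_, coupling_mem_ivPolytope hu hv
    ⟨h.x0_z0, h.x1_z0, h.x0_z1, h.x1_z1, hu₀, hv₀, hu₁, hv₁⟩, ?_, ?_⟩
  · rw [y1Mass_coupling, hv_sum, h.x0_z0, h.x0_z1, upperDoX1]
  · rw [y0Mass_coupling, hu_sum, lowerDoX0]

end Bounds

theorem iv_simultaneous_max_min_general
    (a : Fin 2 → Fin 2 → Fin 2 → ℝ)
    (Q : Set (Fin 4 → Fin 4 → ℝ))
    (hQ : Q = {q : Fin 4 → Fin 4 → ℝ |
      (∀ i j : Fin 4, 0 ≤ q i j) ∧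
      a 0 0 0 = q 0 0 + q 1 0 + q 0 1 + q 1 1 ∧
      a 0 1 0 = q 2 0 + q 2 2 + q 3 0 + q 3 2 ∧
      a 1 0 0 = q 0 2 + q 0 3 + q 1 2 + q 1 3 ∧
      a 1 1 0 = q 2 1 + q 2 3 + q 3 1 + q 3 3 ∧
      a 0 0 1 = q 0 0 + q 2 0 + q 0 1 + q 2 1 ∧
      a 0 1 1 = q 1 0 + q 1 2 + q 3 0 + q 3 2 ∧
      a 1 0 1 = q 0 2 + q 0 3 + q 2 2 + q 2 3 ∧
      a 1 1 1 = q 1 1 + q 1 3 + q 3 1 + q 3 3})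
    (F G : (Fin 4 → Fin 4 → ℝ) → ℝ)
    (hF : F = fun q => ∑ i : Fin 4, (q i 1 + q i 3))
    (hG : G = fun q => ∑ i : Fin 4, (q i 2 + q i 3))
    (hne : Q.Nonempty) :
    ∃ qstar ∈ Q, (∀ q ∈ Q, F q ≤ F qstar) ∧ (∀ q ∈ Q, G qstar ≤ G q) := by
  subst hQ hF hG
  obtain ⟨qb, hqb, hmax⟩ := (isCompact_ivPolytope a).exists_isMaxOn hne
    (f := fun q => typeMass q 0) (by unfold typeMass; fun_prop)
  obtain ⟨qstar, hqstar, hFstar, hGstar⟩ := exists_mem_ivPolytope_attaining_bounds hqb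
  refine ⟨qstar, hqstar, fun q hq => ?_, fun q hq => ?_⟩
  · calc ∑ i, y1Mass q i ≤ upperDoX1 a (typeMass q 0) := sum_y1Mass_le_upperDoX1 hq
      _ ≤ upperDoX1 a (typeMass qb 0) := upperDoX1_mono a (hmax hq)
      _ = ∑ i, y1Mass qstar i := hFstar.symm
  · calc ∑ i, y0Mass qstar i = lowerDoX0 a (typeMass qb 0) := hGstar
      _ ≤ lowerDoX0 a (typeMass q 0) := lowerDoX0_anti a (hmax hq)
      _ ≤ ∑ i, y0Mass q i := lowerDoX0_le_sum_y0Mass hq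

/-- IV-graph response-variable polytope: the set `Q` of response-variable joint probability
assignments compatible with the observational conditionals `a y x z = P(Y=y, X=x | Z=z)` is
cut out by nonnegativity and eight linear constraints. If `Q` is nonempty, some `qstar ∈ Q`
simultaneously attains the maximum of `F q = P(y₁|do(x₁))` and the minimum of
`G q = P(y₁|do(x₀))` over `Q`. -/
theorem iv_simultaneous_max_min
    (a : Fin 2 → Fin 2 → Fin 2 → ℝ)
    (ha_nonneg : ∀ y x z, 0 ≤ a y x z)
    (ha_sum : ∀ z : Fin 2, ∑ y : Fin 2, ∑ x : Fin 2, a y x z = 1)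
    (Q : Set (Fin 4 → Fin 4 → ℝ))
    (hQ : Q = {q : Fin 4 → Fin 4 → ℝ |
      (∀ i j : Fin 4, 0 ≤ q i j) ∧
      a 0 0 0 = q 0 0 + q 1 0 + q 0 1 + q 1 1 ∧
      a 0 1 0 = q 2 0 + q 2 2 + q 3 0 + q 3 2 ∧
      a 1 0 0 = q 0 2 + q 0 3 + q 1 2 + q 1 3 ∧
      a 1 1 0 = q 2 1 + q 2 3 + q 3 1 + q 3 3 ∧
      a 0 0 1 = q 0 0 + q 2 0 + q 0 1 + q 2 1 ∧
      a 0 1 1 = q 1 0 + q 1 2 + q 3 0 + q 3 2 ∧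
      a 1 0 1 = q 0 2 + q 0 3 + q 2 2 + q 2 3 ∧
      a 1 1 1 = q 1 1 + q 1 3 + q 3 1 + q 3 3})
    (F G : (Fin 4 → Fin 4 → ℝ) → ℝ)
    (hF : F = fun q => ∑ i : Fin 4, (q i 1 + q i 3))
    (hG : G = fun q => ∑ i : Fin 4, (q i 2 + q i 3))
    (hne : Q.Nonempty) :
    ∃ qstar ∈ Q, (∀ q ∈ Q, F q ≤ F qstar) ∧ (∀ q ∈ Q, G qstar ≤ G q) :=
  iv_simultaneous_max_min_general a Q hQ F G hF hG hne
end
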